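/- Consider the Lie algebra L_{9,12} = sl(2,R) ⋉_{D_{1/2} ⊕ 4D_0} A_{6,12} with nonzero brackets [X_1,X_2]=2X_2, [X_1,X_3]=−2X_3, [X_2,X_3]=X_1, [X_1,X_4]=X_4, [X_1,X_5]=−X_5, [X_2,X_5]=X_4, [X_3,X_4]=X_5, [X_4,X_5]=X_6, [X_7,X_9]=X_6, [X_8,X_9]=X_7. Then the three functions I_1 = 2 x_6 x_8 − x_7², I_2 = 4 x_2 x_3 x_6 + 2 x_2 x_5² + 2 x_1 x_4 x_5 − 2 x_3 x_4² + x_1² x_6, I_3 = x_6 satisfy \hat{X}_i(I_m) = 0 for all i = 1,...,9 and m = 1,2,3. -/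
import Mathlib

open Finset

noncomputable def Xhat (C : Fin 9 → Fin 9 → Fin 9 → ℝ) (i : Fin 9)
    (F : (Fin 9 → ℝ) → ℝ) : (Fin 9 → ℝ) → ℝ :=
  fun x => ∑ j : Fin 9, (∑ k : Fin 9, C i j k * x k) * fderiv ℝ F x (Pi.single j 1)

noncomputable def Lhalf : Fin 9 → Fin 9 → Fin 9 → ℝ := fun i j k =>
  if (i, j, k) = ((0 : Fin 9), (1 : Fin 9), (1 : Fin 9)) then (2 : ℝ) else
  if (i, j, k) = ((0 : Fin 9), (2 : Fin 9), (2 : Fin 9)) then (-2 : ℝ) else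
  if (i, j, k) = ((1 : Fin 9), (2 : Fin 9), (0 : Fin 9)) then (1 : ℝ) else
  if (i, j, k) = ((0 : Fin 9), (3 : Fin 9), (3 : Fin 9)) then (1 : ℝ) else
  if (i, j, k) = ((0 : Fin 9), (4 : Fin 9), (4 : Fin 9)) then (-1 : ℝ) else
  if (i, j, k) = ((1 : Fin 9), (4 : Fin 9), (3 : Fin 9)) then (1 : ℝ) else
  if (i, j, k) = ((2 : Fin 9), (3 : Fin 9), (4 : Fin 9)) then (1 : ℝ) else
  if (i, j, k) = ((3 : Fin 9), (4 : Fin 9), (5 : Fin 9)) then (1 : ℝ) else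
  if (i, j, k) = ((6 : Fin 9), (8 : Fin 9), (5 : Fin 9)) then (1 : ℝ) else
  if (i, j, k) = ((7 : Fin 9), (8 : Fin 9), (6 : Fin 9)) then (1 : ℝ) else
  0

noncomputable def C (i j k : Fin 9) : ℝ := Lhalf i j k - Lhalf j i k

noncomputable def I₁ : (Fin 9 → ℝ) → ℝ := fun x => 2 * x 5 * x 7 - (x 6)^2
noncomputable def I₂ : (Fin 9 → ℝ) → ℝ :=
  fun x => 4 * x 1 * x 2 * x 5 + 2 * x 1 * (x 4)^2 + 2 * x 0 * x 3 * x 4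
    - 2 * x 2 * (x 3)^2 + (x 0)^2 * x 5
noncomputable def I₃ : (Fin 9 → ℝ) → ℝ := fun x => x 5

noncomputable def p (j : Fin 9) : (Fin 9 → ℝ) →L[ℝ] ℝ := ContinuousLinearMap.proj j

lemma hp (j : Fin 9) (x : Fin 9 → ℝ) : HasFDerivAt (fun x : Fin 9 → ℝ => x j) (p j) x :=
  hasFDerivAt_apply j x

lemma sum9 (f : Fin 9 → ℝ) : ∑ j, f j = f 0 + f 1 + f 2 + f 3 + f 4 + f 5 + f 6 + f 7 + f 8 := by
  simp [Fin.sum_univ_succ]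
  norm_num [Fin.succ, add_assoc]

lemma fd1 (x v : Fin 9 → ℝ) :
    fderiv ℝ I₁ x v = 2 * v 5 * x 7 + 2 * x 5 * v 7 - 2 * x 6 * v 6 := by
  have h0 := (((hp 5 x).const_mul 2).mul (hp 7 x)).sub ((hp 6 x).mul (hp 6 x))
  simp only [← pow_two] at h0
  have h : HasFDerivAt I₁ _ x := h0
  rw [h.fderiv]; simp [p]; ring

lemma fd3 (x v : Fin 9 → ℝ) : fderiv ℝ I₃ x v = v 5 := by
  have h : HasFDerivAt I₃ _ x := hp 5 x
  rw [h.fderiv]; simp [p]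

lemma fd2 (x v : Fin 9 → ℝ) :
    fderiv ℝ I₂ x v = 4 * v 1 * x 2 * x 5 + 4 * x 1 * v 2 * x 5 + 4 * x 1 * x 2 * v 5
      + 2 * v 1 * x 4 ^ 2 + 4 * x 1 * x 4 * v 4
      + 2 * v 0 * x 3 * x 4 + 2 * x 0 * v 3 * x 4 + 2 * x 0 * x 3 * v 4
      - 2 * v 2 * x 3 ^ 2 - 4 * x 2 * x 3 * v 3
      + 2 * x 0 * v 0 * x 5 + x 0 ^ 2 * v 5 := by
  have a := (((hp 1 x).const_mul 4).mul (hp 2 x)).mul (hp 5 x)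
  have b := ((hp 1 x).const_mul 2).mul ((hp 4 x).mul (hp 4 x))
  have c := (((hp 0 x).const_mul 2).mul (hp 3 x)).mul (hp 4 x)
  have d := ((hp 2 x).const_mul 2).mul ((hp 3 x).mul (hp 3 x))
  have e := ((hp 0 x).mul (hp 0 x)).mul (hp 5 x)
  have h0 := ((((a.add b).add c).sub d).add e)
  simp only [← pow_two] at h0
  have h : HasFDerivAt I₂ _ x := h0
  rw [h.fderiv]; simp [p]; ring

set_option maxHeartbeats 4000000 in
theorem invariants_L9_12 :
    ∀ (i : Fin 9) (x : Fin 9 → ℝ),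
      Xhat C i I₁ x = 0 ∧ Xhat C i I₂ x = 0 ∧ Xhat C i I₃ x = 0 := by
  intro i x
  refine ⟨?_, ?_, ?_⟩ <;> fin_cases i <;>
    simp only [Xhat, sum9, fd1, fd2, fd3] <;>
    simp +decide [C, Lhalf, Prod.mk.injEq, Pi.single_apply] <;>
    ring_nf
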